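/- Let F(r,t) be the flow of y' = f(y), f(r) = −(r cos r sin r)/(r + cos r sin r), with F(r,0) = r, and let G(r,t) = ∫₀ᵗ g(F(r,s)) ds where g(r) = −cos r (r cos r + sin r)/(r + cos r sin r). Then G(r,t) < ln(7/6) for all r ∈ [0, π + δ) (δ > 0 small) and all t ≥ 0. -/

import Mathlib

/-!
Along a solution `y` of `y' = f(y)` one has `g(y) = (log |φ(y)|)'` for `φ(x) = x sin x`, so
`G(r, t) = log |φ(y t) / φ(r)|` as long as `y` avoids the zeros of `φ`.  The zeros `kπ` of `sin`
are equilibria with `|f(x)| < 3 |x - kπ|`, and `f` has a constant sign on each quarter period;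
comparing `y` with barriers `c ∓ ε e^{-3t}` shows that `(-π/2, π/2)`, `(0, π)` and
`(2.3, 3π/2)` are invariant.  On the first and the last of these `g ≤ 0` (the maximum point
`r_M ≈ 2.03` of `φ` lies below `2.3`), hence `G ≤ 0`.  For `r ∈ [π/2, 2.3]` the solution stays
in `(0, π)`, where `φ < 7π/12`, while `φ(r) ≥ π/2`; hence `G < log (7/6)`.
-/

open Real

/-- `f(r) = −(r cos r sin r)/(r + cos r sin r)`. -/
noncomputable def fOT (r : ℝ) : ℝ :=
  -(r * Real.cos r * Real.sin r) / (r + Real.cos r * Real.sin r)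

/-- `g(r) = −cos r (r cos r + sin r)/(r + cos r sin r)`, extended continuously by
`g(0) = −1`. -/
noncomputable def gOT (r : ℝ) : ℝ :=
  if r = 0 then -1
  else -(Real.cos r * (r * Real.cos r + Real.sin r)) / (r + Real.cos r * Real.sin r)

open Set

theorem cos_mul_sin_eq_sin_two_mul_div_two (x : ℝ) : cos x * sin x = sin (2 * x) / 2 := by
  rw [sin_two_mul]; ring

theorem abs_cos_mul_sin_lt_abs {x : ℝ} (hx : x ≠ 0) : |cos x * sin x| < |x| := by
  have := abs_sin_lt_abs (mul_ne_zero two_ne_zero hx)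
  rw [abs_mul, abs_two] at this
  rw [cos_mul_sin_eq_sin_two_mul_div_two, abs_div, abs_two]
  linarith

theorem add_cos_mul_sin_pos {x : ℝ} (hx : 0 < x) : 0 < x + cos x * sin x := by
  have := abs_cos_mul_sin_lt_abs hx.ne'
  rw [abs_of_pos hx] at this
  linarith [neg_abs_le (cos x * sin x)]

theorem add_cos_mul_sin_ne_zero {x : ℝ} (hx : x ≠ 0) : x + cos x * sin x ≠ 0 := by
  intro h
  have := abs_cos_mul_sin_lt_abs hx
  rw [show cos x * sin x = -x by linarith, abs_neg] at this
  exact this.false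

theorem cos_mul_sin_nonneg_of_mem_Icc {x : ℝ} (h : x ∈ Icc 0 (π / 2)) : 0 ≤ cos x * sin x :=
  mul_nonneg (cos_nonneg_of_mem_Icc ⟨by linarith [h.1, pi_pos], h.2⟩)
    (sin_nonneg_of_nonneg_of_le_pi h.1 (by linarith [h.2, pi_pos]))

theorem fOT_neg (x : ℝ) : fOT (-x) = -fOT x := by
  simp only [fOT, cos_neg, sin_neg]
  rw [show -x + cos x * -sin x = -(x + cos x * sin x) by ring, div_neg]
  ring

theorem fOT_nonpos {x : ℝ} (hx : 0 ≤ x) (h : 0 ≤ cos x * sin x) : fOT x ≤ 0 := by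
  rw [fOT, mul_assoc]
  exact div_nonpos_of_nonpos_of_nonneg (neg_nonpos.2 (mul_nonneg hx h)) (by linarith)

theorem fOT_nonneg {x : ℝ} (hx : 0 ≤ x) (h : cos x * sin x ≤ 0) : 0 ≤ fOT x := by
  rcases hx.eq_or_lt with rfl | hx
  · simp [fOT]
  rw [fOT, mul_assoc, neg_div]
  exact neg_nonneg.2 (div_nonpos_of_nonpos_of_nonneg (mul_nonpos_of_nonneg_of_nonpos hx.le h)
    (add_cos_mul_sin_pos hx).le)

theorem abs_fOT_le_of_nonneg {x : ℝ} (hx : 0 ≤ x) : |fOT x| ≤ 3 * |sin x| := by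
  rcases hx.eq_or_lt with rfl | hx
  · simp [fOT]
  have hD := add_cos_mul_sin_pos hx
  rw [fOT, abs_div, abs_neg, abs_of_pos hD, div_le_iff₀ hD, abs_mul, abs_mul, abs_of_pos hx]
  suffices x * |cos x| ≤ 3 * (x + cos x * sin x) by nlinarith [abs_nonneg (sin x)]
  have hcos : x * |cos x| ≤ x := by nlinarith [abs_cos_le_one x]
  by_cases hcs : 0 ≤ cos x * sin x
  · linarith
  · have hx' : π / 2 < x := by
      by_contra! h
      exact hcs (cos_mul_sin_nonneg_of_mem_Icc ⟨hx.le, h⟩)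
    have : -(1 / 2) ≤ cos x * sin x := by
      rw [cos_mul_sin_eq_sin_two_mul_div_two]; linarith [neg_one_le_sin (2 * x)]
    linarith [pi_gt_three]

theorem abs_fOT_le (x : ℝ) : |fOT x| ≤ 3 * |sin x| := by
  rcases le_total 0 x with hx | hx
  · exact abs_fOT_le_of_nonneg hx
  · simpa [fOT_neg, abs_neg] using abs_fOT_le_of_nonneg (neg_nonneg.2 hx)

theorem abs_fOT_lt {a x : ℝ} (ha : sin a = 0) (hx : x ≠ a) : |fOT x| < 3 * |x - a| := by
  have hsin : |sin x| = |sin (x - a)| := by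
    rw [sin_sub, ha, mul_zero, sub_zero, abs_mul, abs_cos_eq_sqrt_one_sub_sin_sq, ha]
    simp
  calc |fOT x| ≤ 3 * |sin x| := abs_fOT_le x
    _ < 3 * |x - a| := by
      rw [hsin]; linarith [abs_sin_lt_abs (sub_ne_zero.2 hx)]

theorem gOT_neg (x : ℝ) : gOT (-x) = gOT x := by
  simp only [gOT, neg_eq_zero, cos_neg, sin_neg]
  split_ifs
  · rfl
  · rw [show -x + cos x * -sin x = -(x + cos x * sin x) by ring,
      show -x * cos x + -sin x = -(x * cos x + sin x) by ring, div_neg]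
    ring

theorem gOT_nonpos {x : ℝ} (hx : 0 < x) (h : 0 ≤ cos x * (x * cos x + sin x)) : gOT x ≤ 0 := by
  rw [gOT, if_neg hx.ne']
  exact div_nonpos_of_nonpos_of_nonneg (neg_nonpos.2 h) (add_cos_mul_sin_pos hx).le

theorem gOT_nonpos_of_abs_le {x : ℝ} (h : |x| ≤ π / 2) : gOT x ≤ 0 := by
  wlog hx : 0 ≤ x generalizing x
  · simpa [gOT_neg] using this (x := -x) (by rwa [abs_neg]) (by linarith)
  rcases hx.eq_or_lt with rfl | hx
  · simp [gOT]
  rw [abs_of_pos hx] at h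
  have hcos := cos_nonneg_of_mem_Icc ⟨by linarith [pi_pos], h⟩
  have hsin := sin_nonneg_of_nonneg_of_le_pi hx.le (by linarith [pi_pos])
  exact gOT_nonpos hx (by positivity)

theorem sin_add_mul_cos_neg {x : ℝ} (h : x ∈ Icc 2.3 π) : sin x + x * cos x < 0 := by
  obtain ⟨h0, h1⟩ := h
  have hpi : π < 3.141593 := pi_lt_d6
  have hc : cos x ≤ cos 2.3 := cos_le_cos_of_nonneg_of_le_pi (by norm_num) h1 h0
  have hc23 : cos 2.3 ≤ -0.6 := by
    have := one_sub_sq_div_two_le_cos (x := π - 2.3)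
    rw [cos_pi_sub] at this
    nlinarith
  nlinarith [sin_le_one x]

theorem gOT_nonpos_of_mem_Icc {x : ℝ} (h : x ∈ Icc 2.3 (3 * π / 2)) : gOT x ≤ 0 := by
  have hx : 0 < x := by linarith [h.1]
  have hcos : cos x ≤ 0 :=
    cos_nonpos_of_pi_div_two_le_of_le (by linarith [h.1, pi_le_four]) (by linarith [h.2])
  refine gOT_nonpos hx (mul_nonneg_of_nonpos_of_nonpos hcos ?_)
  rcases le_total x π with hxπ | hxπ
  · linarith [sin_add_mul_cos_neg ⟨h.1, hxπ⟩]
  · have := sin_nonpos_of_nonpos_of_neg_pi_le (x := x - 2 * π) (by linarith [h.2]) (by linarith)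
    rw [sin_sub_two_pi] at this
    nlinarith

theorem gOT_eq {x : ℝ} (h : x * sin x ≠ 0) :
    gOT x = (sin x + x * cos x) * fOT x / (x * sin x) := by
  have hx : x ≠ 0 := left_ne_zero_of_mul h
  have hs : sin x ≠ 0 := right_ne_zero_of_mul h
  have hD := add_cos_mul_sin_ne_zero hx
  rw [gOT, if_neg hx, fOT]
  field_simp
  ring

theorem continuousAt_gOT {x : ℝ} (hx : x ≠ 0) : ContinuousAt gOT x := by
  have : ContinuousAt (fun r => -(cos r * (r * cos r + sin r)) / (r + cos r * sin r)) x :=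
    ContinuousAt.div (by fun_prop) (by fun_prop) (add_cos_mul_sin_ne_zero hx)
  refine this.congr (Filter.eventuallyEq_of_mem (isOpen_ne.mem_nhds hx) fun r hr => ?_)
  simp only [gOT, if_neg (show r ≠ 0 from hr)]

theorem cos_le_one_sub_sq_div_two_add {x : ℝ} (hx : 0 ≤ x) (hx2 : x ≤ 4) :
    cos x ≤ 1 - x ^ 2 / 2 + x ^ 4 / 24 := by
  have hs := sin_ge_sub_cube (x := x / 2) (by linarith)
  have hpos : 0 ≤ x / 2 - (x / 2) ^ 3 / 6 := by nlinarith [mul_nonneg hx hx]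
  have hcos : cos x = 1 - 2 * sin (x / 2) ^ 2 := by
    have := cos_two_mul' (x / 2)
    rw [show 2 * (x / 2) = x by ring, cos_sq'] at this
    linarith
  rw [hcos]
  nlinarith [pow_le_pow_left₀ hpos hs 2, pow_nonneg hx 6]

theorem mul_sin_lt {x : ℝ} (h0 : 0 < x) (h1 : x < π) : x * sin x < 7 * π / 12 := by
  rcases le_or_gt x (π / 2) with h | h
  · nlinarith [sin_le_one x, sin_pos_of_pos_of_lt_pi h0 h1, pi_pos]
  obtain ⟨u, rfl⟩ : ∃ u, x = π / 2 + u := ⟨x - π / 2, by ring⟩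
  have hu0 : 0 < u := by linarith
  have hpl : 3.141592 < π := pi_gt_d6
  have hpu : π < 3.141593 := pi_lt_d6
  rw [add_comm, sin_add_pi_div_two, add_comm]
  -- `max φ ≈ 1.8197` is attained at `u ≈ 0.4581`, against `7π/12 ≈ 1.8326`
  calc (π / 2 + u) * cos u
      ≤ (π / 2 + u) * (1 - u ^ 2 / 2 + u ^ 4 / 24) := by
        gcongr; exact cos_le_one_sub_sq_div_two_add hu0.le (by linarith)
    _ < 7 * π / 12 := by
      nlinarith [sq_nonneg (u - 0.4581), mul_nonneg (sq_nonneg (u - 0.4581)) hu0.le,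
        mul_nonneg (mul_nonneg (sq_nonneg (u - 0.4581)) hu0.le) hu0.le,
        sq_nonneg (u ^ 2 - 0.2099), mul_pos hu0 hu0, sq_nonneg (u - 1.5708)]

theorem pi_div_two_le_mul_sin {x : ℝ} (h : x ∈ Icc (π / 2) 2.3) : π / 2 ≤ x * sin x := by
  obtain ⟨u, rfl⟩ : ∃ u, x = π / 2 + u := ⟨x - π / 2, by ring⟩
  have hpl : 3.141592 < π := pi_gt_d6
  have hu0 : 0 ≤ u := by linarith [h.1]
  have hu1 : u ≤ 0.74 := by linarith [h.2]
  have hpu : π < 3.141593 := pi_lt_d6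
  rw [add_comm, sin_add_pi_div_two, add_comm]
  have hfac : 0 ≤ u * (1 - π * u / 4 - u ^ 2 / 2) := mul_nonneg hu0 (by nlinarith)
  nlinarith [one_sub_sq_div_two_le_cos (x := u)]

theorem intervalIntegral.integral_nonpos {f : ℝ → ℝ} {a b : ℝ} {μ : MeasureTheory.Measure ℝ}
    (hab : a ≤ b) (hf : ∀ u ∈ Icc a b, f u ≤ 0) : ∫ u in a..b, f u ∂μ ≤ 0 := by
  have := intervalIntegral.integral_nonneg (μ := μ) hab fun u hu => neg_nonneg.2 (hf u hu)
  rwa [intervalIntegral.integral_neg, neg_nonneg] at this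

theorem flow_lt_of_speed_lt {v y : ℝ → ℝ} (hy : ∀ t, HasDerivAt y (v (y t)) t) {c K : ℝ}
    (hK : 0 ≤ K) (h0 : y 0 < c) (hv : ∀ x ∈ Ico (y 0) c, v x < K * (c - x))
    {t : ℝ} (ht : 0 ≤ t) : y t < c := by
  set B : ℝ → ℝ := fun s => c - (c - y 0) * exp (-K * s)
  have hB : ∀ s, HasDerivAt B (K * (c - B s)) s := fun s =>
    ((((hasDerivAt_id' s).const_mul (-K)).exp.const_mul (c - y 0)).const_sub c).congr_deriv
      (by simp only [B]; ring)
  have hexp : ∀ s, 0 ≤ s → 0 < exp (-K * s) ∧ exp (-K * s) ≤ 1 := fun s hs =>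
    ⟨exp_pos _, exp_le_one_iff.2 (by nlinarith)⟩
  have hyB : y t ≤ B t :=
    image_le_of_deriv_right_lt_deriv_boundary (fun s _ => (hy s).continuousAt.continuousWithinAt)
      (fun s _ => (hy s).hasDerivWithinAt) (by simp [B]) hB
      (fun s hs hys => by
        obtain ⟨h1, h2⟩ := hexp s hs.1
        rw [hys]
        exact hv _ ⟨by nlinarith, by nlinarith⟩) ⟨ht, le_rfl⟩
  obtain ⟨h1, -⟩ := hexp t ht
  have : B t < c := by simp only [B]; nlinarith
  linarith

theorem lt_flow_of_lt_speed {v y : ℝ → ℝ} (hy : ∀ t, HasDerivAt y (v (y t)) t) {c K : ℝ}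
    (hK : 0 ≤ K) (h0 : c < y 0) (hv : ∀ x ∈ Ioc c (y 0), -(K * (x - c)) < v x)
    {t : ℝ} (ht : 0 ≤ t) : c < y t := by
  have := flow_lt_of_speed_lt (v := fun x => -v (-x)) (y := fun s => -y s) (c := -c)
    (fun s => by simpa using (hy s).fun_neg) hK (neg_lt_neg h0)
    (fun x hx => by
      have := hv (-x) ⟨by linarith [hx.2], by linarith [hx.1]⟩
      linarith) ht
  linarith

theorem flow_lt_of_fOT_nonpos {y : ℝ → ℝ} (hy : ∀ t, HasDerivAt y (fOT (y t)) t) {a c t : ℝ}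
    (ha : sin a = 0) (hac : a ≤ c) (hf : ∀ x ∈ Ico a c, fOT x ≤ 0) (h0 : y 0 < c)
    (ht : 0 ≤ t) : y t < c := by
  refine flow_lt_of_speed_lt hy (K := 3) (by norm_num) h0 (fun x hx => ?_) ht
  rcases lt_or_ge x a with hxa | hxa
  · have := abs_fOT_lt ha hxa.ne
    rw [abs_of_neg (sub_neg.2 hxa)] at this
    linarith [le_abs_self (fOT x)]
  · linarith [hf x ⟨hxa, hx.2⟩, hx.2]

theorem lt_flow_of_fOT_nonneg {y : ℝ → ℝ} (hy : ∀ t, HasDerivAt y (fOT (y t)) t) {a c t : ℝ}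
    (ha : sin a = 0) (hca : c ≤ a) (hf : ∀ x ∈ Ioc c a, 0 ≤ fOT x) (h0 : c < y 0)
    (ht : 0 ≤ t) : c < y t := by
  refine lt_flow_of_lt_speed hy (K := 3) (by norm_num) h0 (fun x hx => ?_) ht
  rcases lt_or_ge a x with hxa | hxa
  · have := abs_fOT_lt ha hxa.ne'
    rw [abs_of_pos (sub_pos.2 hxa)] at this
    linarith [neg_abs_le (fOT x)]
  · linarith [hf x ⟨hx.1, hxa⟩, hx.1]

theorem flow_mem_Ioo_neg_pi_div_two {y : ℝ → ℝ} (hy : ∀ t, HasDerivAt y (fOT (y t)) t) {t : ℝ}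
    (h0 : y 0 ∈ Ioo (-(π / 2)) (π / 2)) (ht : 0 ≤ t) : y t ∈ Ioo (-(π / 2)) (π / 2) := by
  have hf : ∀ x ∈ Ico 0 (π / 2), fOT x ≤ 0 := fun x hx =>
    fOT_nonpos hx.1 (cos_mul_sin_nonneg_of_mem_Icc (Ico_subset_Icc_self hx))
  refine ⟨lt_flow_of_fOT_nonneg hy sin_zero (by linarith [pi_pos]) (fun x hx => ?_) h0.1 ht,
    flow_lt_of_fOT_nonpos hy sin_zero (by linarith [pi_pos]) hf h0.2 ht⟩
  rw [← neg_neg x, fOT_neg, neg_nonneg]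
  exact hf (-x) ⟨by linarith [hx.2], by linarith [hx.1]⟩

theorem flow_mem_Ioo_zero_pi {y : ℝ → ℝ} (hy : ∀ t, HasDerivAt y (fOT (y t)) t) {t : ℝ}
    (h0 : y 0 ∈ Ioo 0 π) (ht : 0 ≤ t) : y t ∈ Ioo 0 π :=
  ⟨lt_flow_of_fOT_nonneg hy sin_zero le_rfl (fun _ hx => absurd hx.2 hx.1.not_ge) h0.1 ht,
    flow_lt_of_fOT_nonpos hy sin_pi le_rfl (fun _ hx => absurd hx.2 hx.1.not_gt) h0.2 ht⟩

theorem flow_mem_Ioo_two_point_three {y : ℝ → ℝ} (hy : ∀ t, HasDerivAt y (fOT (y t)) t)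
    {t : ℝ} (h0 : y 0 ∈ Ioo 2.3 (3 * π / 2)) (ht : 0 ≤ t) : y t ∈ Ioo 2.3 (3 * π / 2) := by
  have hpi := pi_gt_three
  have hpi' := pi_le_four
  refine ⟨lt_flow_of_fOT_nonneg hy sin_pi (by linarith) (fun x hx => ?_) h0.1 ht,
    flow_lt_of_fOT_nonpos hy sin_pi (by linarith) (fun x hx => ?_) h0.2 ht⟩
  · refine fOT_nonneg (by linarith [hx.1]) (mul_nonpos_of_nonpos_of_nonneg ?_ ?_)
    · exact cos_nonpos_of_pi_div_two_le_of_le (by linarith [hx.1]) (by linarith [hx.2])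
    · exact sin_nonneg_of_nonneg_of_le_pi (by linarith [hx.1]) hx.2
  · refine fOT_nonpos (by linarith [hx.1]) (mul_nonneg_of_nonpos_of_nonpos ?_ ?_)
    · exact cos_nonpos_of_pi_div_two_le_of_le (by linarith [hx.1]) (by linarith [hx.2])
    · rw [← sin_sub_two_pi]
      exact sin_nonpos_of_nonpos_of_neg_pi_le (by linarith [hx.2]) (by linarith [hx.1])

theorem integral_gOT_comp_flow {y : ℝ → ℝ} (hy : ∀ t, HasDerivAt y (fOT (y t)) t) {a b : ℝ}
    (h : ∀ s ∈ uIcc a b, y s * sin (y s) ≠ 0) :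
    ∫ s in a..b, gOT (y s) = log (y b * sin (y b)) - log (y a * sin (y a)) := by
  refine intervalIntegral.integral_eq_sub_of_hasDerivAt
    (f := fun s => log (y s * sin (y s))) (fun s hs => ?_) ?_
  · refine (((hy s).fun_mul (hy s).sin).log (h s hs)).congr_deriv ?_
    rw [gOT_eq (h s hs)]
    ring
  · refine ContinuousOn.intervalIntegrable fun s hs => ?_
    have hys : y s ≠ 0 := left_ne_zero_of_mul (h s hs)
    exact ((continuousAt_gOT hys).comp (hy s).continuousAt).continuousWithinAt

theorem integral_gOT_comp_flow_lt_log {y : ℝ → ℝ} (hy : ∀ t, HasDerivAt y (fOT (y t)) t)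
    (h0 : y 0 ∈ Icc (π / 2) 2.3) {t : ℝ} (ht : 0 ≤ t) :
    ∫ s in (0 : ℝ)..t, gOT (y s) < log (7 / 6) := by
  have hmem : ∀ s, 0 ≤ s → y s ∈ Ioo 0 π :=
    fun _ => flow_mem_Ioo_zero_pi hy ⟨by linarith [h0.1, pi_pos], by linarith [h0.2, pi_gt_three]⟩
  have hφ : ∀ s, 0 ≤ s → 0 < y s * sin (y s) := fun s hs =>
    mul_pos (hmem s hs).1 (sin_pos_of_pos_of_lt_pi (hmem s hs).1 (hmem s hs).2)
  rw [integral_gOT_comp_flow hy fun s hs => (hφ s (uIcc_of_le ht ▸ hs).1).ne',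
    ← log_div (hφ t ht).ne' (hφ 0 le_rfl).ne']
  refine log_lt_log (div_pos (hφ t ht) (hφ 0 le_rfl)) ?_
  rw [div_lt_iff₀ (hφ 0 le_rfl)]
  calc y t * sin (y t) < 7 * π / 12 := mul_sin_lt (hmem t ht).1 (hmem t ht).2
    _ ≤ 7 / 6 * (y 0 * sin (y 0)) := by linarith [pi_div_two_le_mul_sin h0]

/-- Let `F(r,·) = y` be the flow of `y' = f(y)` with `y(0) = r`, and
`G(r,t) = ∫₀ᵗ g(F(r,s)) ds`.  Then `G(r,t) < ln(7/6)` for all `r ∈ [0, π + δ)`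
(with `0 < δ < π/2` small) and all `t ≥ 0`. -/
theorem stmt11 (δ : ℝ) (hδ : δ ∈ Set.Ioo (0 : ℝ) (π / 2))
    (r : ℝ) (hr : r ∈ Set.Ico (0 : ℝ) (π + δ))
    (y : ℝ → ℝ) (hy0 : y 0 = r) (hy : ∀ t : ℝ, HasDerivAt y (fOT (y t)) t) :
    ∀ t : ℝ, 0 ≤ t → (∫ s in (0 : ℝ)..t, gOT (y s)) < Real.log (7 / 6) := by
  intro t ht
  obtain ⟨-, hδ⟩ := hδ
  obtain ⟨hr0, hrδ⟩ := hr
  subst hy0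
  have hlog : 0 < log (7 / 6) := log_pos (by norm_num)
  rcases lt_or_ge (y 0) (π / 2) with hr | hr
  · refine (intervalIntegral.integral_nonpos ht fun s hs => gOT_nonpos_of_abs_le ?_).trans_lt hlog
    obtain ⟨h1, h2⟩ := flow_mem_Ioo_neg_pi_div_two hy ⟨by linarith [pi_pos], hr⟩ hs.1
    exact abs_le.2 ⟨h1.le, h2.le⟩
  rcases le_or_gt (y 0) 2.3 with hr' | hr'
  · exact integral_gOT_comp_flow_lt_log hy ⟨hr, hr'⟩ ht
  · refine (intervalIntegral.integral_nonpos ht fun s hs => gOT_nonpos_of_mem_Icc ?_).trans_lt hlog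
    exact Ioo_subset_Icc_self (flow_mem_Ioo_two_point_three hy ⟨hr', by linarith⟩ hs.1)
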